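/- arXiv:1302.2668 — 6 statements merged into one kernel-verified Lean document; each statement's English description precedes it below -/
import Mathlib

section
/- Let β ∈ ℝ, D > 0, and let φ : ℝ² → ℝ be continuous. Let P₁, P₂, P₃ ∈ ℝ² be the vertices of a nondegenerate triangle, i.e. P₂ − P₁ and P₃ − P₁ are linearly independent. Define F₁(v) = ℱ(v; P₁, P₂) and F₂(v) = ℱ(v; P₁, P₃) for constant vector fields v ∈ ℝ². Then the linear map v ↦ (F₁(v), F₂(v)) from ℝ² to ℝ² is injective; equivalently, the 2×2 matrix with entries F_{ji} = F_j(e_i) (where e₁ = (1,0), e₂ = (0,1) form the basis of the divergence-free Raviart–Thomas space RT₀⁰) is nonsingular. -/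
/-!
Because `v` is constant, it leaves the integral: `ℱ(v; P, Q) = ⟪v, w • (Q - P)⟫` with the weight
`w = (e^{-βφ(Q)} / D) ‖Q - P‖⁻¹ ∫₀^S e^{βφ(P + s n)} ds`, which is nonzero since the integrand is
positive and continuous. The two functionals are therefore inner products with the linearly
independent vectors `w₂ (P₂ - P₁)`, `w₃ (P₃ - P₁)`, and the interpolation matrix is their
coordinate matrix.
-/

open MeasureTheory intervalIntegral
open scoped RealInnerProductSpace

/-- The exponentially weighted line functional `ℱ(v; P, Q)` of a constant vector field `v`
along the segment from `P` to `Q`: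
`ℱ(v; P, Q) = (e^{−βφ(Q)}/D) ∫₀^S e^{βφ(P + s·n)} (v · n) ds`,
where `S = ‖Q − P‖` and `n = (Q − P)/S`. -/
noncomputable def expFitFunctional (β D : ℝ) (φ : EuclideanSpace ℝ (Fin 2) → ℝ)
    (v P Q : EuclideanSpace ℝ (Fin 2)) : ℝ :=
  (Real.exp (-(β * φ Q)) / D) *
    ∫ s in (0:ℝ)..‖Q - P‖,
      Real.exp (β * φ (P + s • (‖Q - P‖⁻¹ • (Q - P)))) * ⟪v, ‖Q - P‖⁻¹ • (Q - P)⟫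

theorem injective_inner_of_linearIndependent {ι E : Type*} [Fintype ι]
    [NormedAddCommGroup E] [InnerProductSpace ℝ E] [FiniteDimensional ℝ E]
    {g : ι → E} (hg : LinearIndependent ℝ g) (hcard : Fintype.card ι = Module.finrank ℝ E) :
    Function.Injective fun v : E => fun i => ⟪v, g i⟫ := fun _ _ h =>
  InnerProductSpace.ext_inner_right_basis
    (basisOfLinearIndependentOfCardEqFinrank' g hg hcard) fun i => by simpa using congrFun h i

theorem det_ne_zero_of_linearIndependent {ι : Type*} [Fintype ι] [DecidableEq ι]
    {g : ι → EuclideanSpace ℝ ι} (hg : LinearIndependent ℝ g) :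
    (Matrix.of fun i j => g i j).det ≠ 0 := by
  have hrows : LinearIndependent ℝ (Matrix.of fun i j => g i j).row :=
    hg.map' (WithLp.linearEquiv 2 ℝ (ι → ℝ)).toLinearMap (LinearEquiv.ker _)
  exact ((Matrix.isUnit_iff_isUnit_det _).1
    (Matrix.linearIndependent_rows_iff_isUnit.1 hrows)).ne_zero

noncomputable def expFitWeight (β D : ℝ) (φ : EuclideanSpace ℝ (Fin 2) → ℝ)
    (P Q : EuclideanSpace ℝ (Fin 2)) : ℝ :=
  Real.exp (-(β * φ Q)) / D *
    (∫ s in (0:ℝ)..‖Q - P‖, Real.exp (β * φ (P + s • (‖Q - P‖⁻¹ • (Q - P))))) / ‖Q - P‖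

theorem expFitFunctional_eq_inner (β D : ℝ) (φ : EuclideanSpace ℝ (Fin 2) → ℝ)
    (v P Q : EuclideanSpace ℝ (Fin 2)) :
    expFitFunctional β D φ v P Q = ⟪v, expFitWeight β D φ P Q • (Q - P)⟫ := by
  rw [expFitFunctional, intervalIntegral.integral_mul_const, real_inner_smul_right,
    real_inner_smul_right, expFitWeight]
  ring

theorem expFitWeight_ne_zero {β D : ℝ} {φ : EuclideanSpace ℝ (Fin 2) → ℝ} (hD : D ≠ 0)
    (hφ : Continuous φ) {P Q : EuclideanSpace ℝ (Fin 2)} (hPQ : P ≠ Q) :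
    expFitWeight β D φ P Q ≠ 0 := by
  have hS : 0 < ‖Q - P‖ := norm_pos_iff.2 (sub_ne_zero.2 hPQ.symm)
  have hI : 0 < ∫ s in (0:ℝ)..‖Q - P‖, Real.exp (β * φ (P + s • (‖Q - P‖⁻¹ • (Q - P)))) :=
    intervalIntegral_pos_of_pos (Continuous.intervalIntegrable (by fun_prop) _ _)
      (fun _ => Real.exp_pos _) hS
  unfold expFitWeight
  positivity

/-- For a nondegenerate triangle with vertices `P₁, P₂, P₃`, the linear map
`v ↦ (ℱ(v; P₁, P₂), ℱ(v; P₁, P₃))` on constant vector fields is injective; equivalently,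
the 2×2 matrix with entries `F_{ji} = F_j(e_i)`, where `e₁, e₂` is the basis `(1,0), (0,1)`
of the divergence-free Raviart–Thomas space `RT₀⁰`, is nonsingular. -/
theorem expFit_interpolation_matrix_nonsingular_vertices
    (β D : ℝ) (hD : 0 < D) (φ : EuclideanSpace ℝ (Fin 2) → ℝ) (hφ : Continuous φ)
    (P₁ P₂ P₃ : EuclideanSpace ℝ (Fin 2))
    (hind : LinearIndependent ℝ ![P₂ - P₁, P₃ - P₁]) :
    Function.Injective (fun v : EuclideanSpace ℝ (Fin 2) =>
      (expFitFunctional β D φ v P₁ P₂, expFitFunctional β D φ v P₁ P₃)) ∧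
    Matrix.det
      !![expFitFunctional β D φ (EuclideanSpace.single 0 1) P₁ P₂,
         expFitFunctional β D φ (EuclideanSpace.single 1 1) P₁ P₂;
         expFitFunctional β D φ (EuclideanSpace.single 0 1) P₁ P₃,
         expFitFunctional β D φ (EuclideanSpace.single 1 1) P₁ P₃] ≠ 0 := by
  have hweight (j : Fin 2) : ![expFitWeight β D φ P₁ P₂, expFitWeight β D φ P₁ P₃] j ≠ 0 := by
    fin_cases j
    · exact expFitWeight_ne_zero hD.ne' hφ fun h => hind.ne_zero 0 (by simp [h])
    · exact expFitWeight_ne_zero hD.ne' hφ fun h => hind.ne_zero 1 (by simp [h])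
  have hg := hind.units_smul fun j => Units.mk0 _ (hweight j)
  simp only [expFitFunctional_eq_inner]
  constructor
  · intro v v' h
    refine injective_inner_of_linearIndependent hg (by simp) (funext fun j => ?_)
    fin_cases j
    · simpa using congrArg Prod.fst h
    · simpa using congrArg Prod.snd h
  · simpa [Matrix.eta_fin_two (Matrix.of _), EuclideanSpace.inner_single_left] using
      det_ne_zero_of_linearIndependent hg
end

section
/- Let β ∈ ℝ, D > 0, and let φ : ℝ² → ℝ be continuous. Let P₁, P₂, P₃ ∈ ℝ² be the vertices of a nondegenerate triangle (P₂ − P₁ and P₃ − P₁ linearly independent), and let M₁ = (P₁+P₂)/2, M₂ = (P₂+P₃)/2, M₃ = (P₃+P₁)/2 be the three edge midpoints. Define F₁(v) = ℱ(v; M₁, M₂) and F₂(v) = ℱ(v; M₁, M₃) for constant vector fields v ∈ ℝ². Then M₂ − M₁ and M₃ − M₁ are linearly independent, and the 2×2 matrix with entries F_{ji} = F_j(e_i) is nonsingular; equivalently F₁(v) = F₂(v) = 0 implies v = 0. -/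
open MeasureTheory intervalIntegral
open scoped RealInnerProductSpace

/-!
Since `v` enters the integrand only through the constant factor `⟪v, n⟫`, the functional is
`ℱ(v; P, Q) = w ⟪v, Q - P⟫` with a weight `w > 0` (the integrand `e^{βφ}` is positive).
The midpoint edges `M₂ - M₁ = (P₃ - P₁)/2` and `M₃ - M₁ = (P₃ - P₂)/2` are independent, so the
matrix `F_{ji}` is `diag(w₁, w₂)` times a matrix with independent rows, and a vector annihilated by
both functionals is orthogonal to a basis.
-/

theorem linearIndependent_midpoint_sub_midpoint {K V : Type*} [Field K] [NeZero (2 : K)]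
    [AddCommGroup V] [Module K V] {P₁ P₂ P₃ : V}
    (h : LinearIndependent K ![P₂ - P₁, P₃ - P₁]) :
    LinearIndependent K ![(2:K)⁻¹ • (P₂ + P₃) - (2:K)⁻¹ • (P₁ + P₂),
      (2:K)⁻¹ • (P₃ + P₁) - (2:K)⁻¹ • (P₁ + P₂)] := by
  have hcomb : ![(2:K)⁻¹ • (P₂ + P₃) - (2:K)⁻¹ • (P₁ + P₂),
      (2:K)⁻¹ • (P₃ + P₁) - (2:K)⁻¹ • (P₁ + P₂)] =
      ![(0 : K) • (P₂ - P₁) + (2:K)⁻¹ • (P₃ - P₁),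
        (-2⁻¹ : K) • (P₂ - P₁) + (2:K)⁻¹ • (P₃ - P₁)] := by
    ext i; fin_cases i <;> simp <;> module
  rw [hcomb, LinearIndependent.pair_add_smul_add_smul_iff]
  exact ⟨h, by simp [NeZero.ne]⟩

theorem eq_zero_of_forall_inner_eq_zero {𝕜 E ι : Type*} [RCLike 𝕜] [NormedAddCommGroup E]
    [InnerProductSpace 𝕜 E] [FiniteDimensional 𝕜 E] [Fintype ι] {u : ι → E}
    (hu : LinearIndependent 𝕜 u) (hcard : Fintype.card ι = Module.finrank 𝕜 E) {v : E}
    (hv : ∀ i, inner 𝕜 (u i) v = 0) : v = 0 :=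
  InnerProductSpace.ext_inner_left_basis (basisOfLinearIndependentOfCardEqFinrank' u hu hcard)
    fun i => by simpa using hv i

theorem det_mul_inner_single_ne_zero {ι : Type*} [Fintype ι] [DecidableEq ι] {c : ι → ℝ}
    (hc : ∀ j, c j ≠ 0) {u : ι → EuclideanSpace ℝ ι} (hu : LinearIndependent ℝ u) :
    (Matrix.of fun j i => c j * ⟪EuclideanSpace.single i 1, u j⟫).det ≠ 0 := by
  have hfactor : (Matrix.of fun j i => c j * ⟪EuclideanSpace.single i 1, u j⟫) =
      Matrix.diagonal c * Matrix.of fun j i => u j i := by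
    ext j i; simp [Matrix.diagonal_mul, EuclideanSpace.inner_single_left]
  have hrows : LinearIndependent ℝ (Matrix.of fun j i => u j i).row :=
    hu.map' (WithLp.linearEquiv 2 ℝ (ι → ℝ)).toLinearMap (LinearEquiv.ker _)
  rw [hfactor, Matrix.det_mul, Matrix.det_diagonal]
  exact mul_ne_zero (Finset.prod_ne_zero_iff.2 fun j _ => hc j)
    ((Matrix.isUnit_iff_isUnit_det _).1
      (Matrix.linearIndependent_rows_iff_isUnit.1 hrows)).ne_zero

theorem expFitFunctional_eq_weight_mul_inner (β D : ℝ) (φ : EuclideanSpace ℝ (Fin 2) → ℝ)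
    (v P Q : EuclideanSpace ℝ (Fin 2)) :
    expFitFunctional β D φ v P Q = expFitWeight β D φ P Q * ⟪v, Q - P⟫ := by
  simp only [expFitFunctional, expFitWeight, real_inner_smul_right,
    intervalIntegral.integral_mul_const]
  ring

theorem expFitWeight_pos {β D : ℝ} (hD : 0 < D) {φ : EuclideanSpace ℝ (Fin 2) → ℝ}
    (hφ : Continuous φ) {P Q : EuclideanSpace ℝ (Fin 2)} (hPQ : P ≠ Q) :
    0 < expFitWeight β D φ P Q := by
  have hS : 0 < ‖Q - P‖ := norm_pos_iff.2 (sub_ne_zero.2 hPQ.symm)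
  have hI : 0 < ∫ s in (0:ℝ)..‖Q - P‖, Real.exp (β * φ (P + s • (‖Q - P‖⁻¹ • (Q - P)))) :=
    intervalIntegral_pos_of_pos_on (Continuous.intervalIntegrable (by fun_prop) _ _)
      (fun _ _ => Real.exp_pos _) hS
  unfold expFitWeight
  positivity

/-- For a nondegenerate triangle with vertices `P₁, P₂, P₃` and edge midpoints
`M₁ = (P₁+P₂)/2`, `M₂ = (P₂+P₃)/2`, `M₃ = (P₃+P₁)/2`, the vectors `M₂ − M₁` and `M₃ − M₁`
are linearly independent, and the 2×2 matrix with entries `F_{ji} = F_j(e_i)`,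
where `F₁(v) = ℱ(v; M₁, M₂)`, `F₂(v) = ℱ(v; M₁, M₃)` and `e₁ = (1,0)`, `e₂ = (0,1)`,
is nonsingular; equivalently `F₁(v) = F₂(v) = 0` implies `v = 0`. -/
theorem expFit_interpolation_matrix_nonsingular_midpoints
    (β D : ℝ) (hD : 0 < D) (φ : EuclideanSpace ℝ (Fin 2) → ℝ) (hφ : Continuous φ)
    (P₁ P₂ P₃ : EuclideanSpace ℝ (Fin 2))
    (hind : LinearIndependent ℝ ![P₂ - P₁, P₃ - P₁])
    (M₁ M₂ M₃ : EuclideanSpace ℝ (Fin 2))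
    (hM₁ : M₁ = (2:ℝ)⁻¹ • (P₁ + P₂)) (hM₂ : M₂ = (2:ℝ)⁻¹ • (P₂ + P₃))
    (hM₃ : M₃ = (2:ℝ)⁻¹ • (P₃ + P₁)) :
    LinearIndependent ℝ ![M₂ - M₁, M₃ - M₁] ∧
    Matrix.det
      !![expFitFunctional β D φ (EuclideanSpace.single 0 1) M₁ M₂,
         expFitFunctional β D φ (EuclideanSpace.single 1 1) M₁ M₂;
         expFitFunctional β D φ (EuclideanSpace.single 0 1) M₁ M₃,
         expFitFunctional β D φ (EuclideanSpace.single 1 1) M₁ M₃] ≠ 0 ∧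
    ∀ v : EuclideanSpace ℝ (Fin 2),
      expFitFunctional β D φ v M₁ M₂ = 0 → expFitFunctional β D φ v M₁ M₃ = 0 → v = 0 := by
  have hli : LinearIndependent ℝ ![M₂ - M₁, M₃ - M₁] := by
    subst hM₁ hM₂ hM₃; exact linearIndependent_midpoint_sub_midpoint hind
  have hw₂ := expFitWeight_pos (β := β) hD hφ (sub_ne_zero.1 (hli.ne_zero 0)).symm
  have hw₃ := expFitWeight_pos (β := β) hD hφ (sub_ne_zero.1 (hli.ne_zero 1)).symm
  refine ⟨hli, ?_, fun v h₂ h₃ => ?_⟩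
  · have hdet := det_mul_inner_single_ne_zero
      (c := ![expFitWeight β D φ M₁ M₂, expFitWeight β D φ M₁ M₃])
      (Fin.forall_fin_two.2 ⟨hw₂.ne', hw₃.ne'⟩) hli
    simp only [expFitFunctional_eq_weight_mul_inner]
    convert hdet using 2
    ext j i; fin_cases j <;> fin_cases i <;> rfl
  · rw [expFitFunctional_eq_weight_mul_inner, mul_eq_zero, or_iff_right hw₂.ne'] at h₂
    rw [expFitFunctional_eq_weight_mul_inner, mul_eq_zero, or_iff_right hw₃.ne'] at h₃
    refine eq_zero_of_forall_inner_eq_zero hli (by simp) (Fin.forall_fin_two.2 ⟨?_, ?_⟩)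
    · simpa [real_inner_comm] using h₂
    · simpa [real_inner_comm] using h₃
end

section
/- Let β ∈ ℝ, D > 0, and let φ : ℝ² → ℝ be continuous. Let P₁, P₂, P₃ ∈ ℝ² be the vertices of a nondegenerate triangle (P₂ − P₁ and P₃ − P₁ linearly independent), and set F_{1i} = ℱ(e_i; P₁, P₂) and F_{2i} = ℱ(e_i; P₁, P₃) for i = 1, 2, where e₁ = (1,0), e₂ = (0,1). Then the 3×3 matrix with rows (0, 0, 1), (F₁₁, F₁₂, 1), (F₂₁, F₂₂, 1) is invertible; consequently, for each j ∈ {1,2,3} there exist unique real numbers m_{j,1}, m_{j,2} and u_j⁰ such that the function u_j defined on the triangle by u_j(P₁) = u_j⁰, u_j(P₂) = u_j⁰ + m_{j,1}F₁₁ + m_{j,2}F₁₂, u_j(P₃) = u_j⁰ + m_{j,1}F₂₁ + m_{j,2}F₂₂ satisfies the interpolative constraints u_j(P_i) = δ_{ij} at the three vertices. -/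
open MeasureTheory intervalIntegral
open scoped RealInnerProductSpace

/-!
The functional `ℱ(·; P, Q)` is the linear form `v ↦ c ⟪v, Q - P⟫` with `c > 0`: the integrand
is `e^{βφ} ⟪v, n⟫` and `n` is constant along the segment, while the weight integral is positive.
Hence the rows `(F_{k1}, F_{k2})` are positive multiples of the edge vectors `P₂ - P₁`, `P₃ - P₁`,
and the determinant of the `3 × 3` matrix, which is the `2 × 2` minor of these rows, is nonzero
by linear independence. The interpolation conditions for `u_j` are exactly the linear system
with this matrix and right-hand side `e_j`, so they have a unique solution.
-/

section LineFunctional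

variable (β D : ℝ) (φ : EuclideanSpace ℝ (Fin 2) → ℝ)

theorem expFitFunctional_eq_mul_inner (v P Q : EuclideanSpace ℝ (Fin 2)) :
    expFitFunctional β D φ v P Q =
      Real.exp (-(β * φ Q)) / D * (‖Q - P‖⁻¹ *
        ∫ s in (0:ℝ)..‖Q - P‖, Real.exp (β * φ (P + s • (‖Q - P‖⁻¹ • (Q - P))))) *
        ⟪v, Q - P⟫ := by
  rw [expFitFunctional, inner_smul_right, intervalIntegral.integral_mul_const]
  ring

variable {β D φ}

theorem exists_pos_forall_expFitFunctional_eq_mul_inner (hD : 0 < D) (hφ : Continuous φ)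
    {P Q : EuclideanSpace ℝ (Fin 2)} (hPQ : P ≠ Q) :
    ∃ c > 0, ∀ v, expFitFunctional β D φ v P Q = c * ⟪v, Q - P⟫ := by
  refine ⟨_, ?_, fun v ↦ expFitFunctional_eq_mul_inner β D φ v P Q⟩
  have hS : 0 < ‖Q - P‖ := norm_pos_iff.2 (sub_ne_zero.2 hPQ.symm)
  have hweight : 0 < ∫ s in (0:ℝ)..‖Q - P‖,
      Real.exp (β * φ (P + s • (‖Q - P‖⁻¹ • (Q - P)))) :=
    intervalIntegral_pos_of_pos (Continuous.intervalIntegrable (by fun_prop) _ _)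
      (fun _ ↦ Real.exp_pos _) hS
  positivity

end LineFunctional

theorem LinearIndependent.pair_det_ne_zero {K : Type*} [Field K] {u v : Fin 2 → K}
    (h : LinearIndependent K ![u, v]) : u 0 * v 1 - u 1 * v 0 ≠ 0 := by
  have hrows : LinearIndependent K (Matrix.of ![u, v]).row := h
  rw [Matrix.linearIndependent_rows_iff_isUnit, Matrix.isUnit_iff_isUnit_det,
    Matrix.det_fin_two, isUnit_iff_ne_zero] at hrows
  simpa using hrows

theorem LinearIndependent.euclideanSpace_pair_det_ne_zero {a b : EuclideanSpace ℝ (Fin 2)}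
    (h : LinearIndependent ℝ ![a, b]) : a 0 * b 1 - a 1 * b 0 ≠ 0 := by
  refine LinearIndependent.pair_det_ne_zero (K := ℝ) ?_
  have := h.map' (EuclideanSpace.equiv (Fin 2) ℝ).toLinearMap (LinearEquiv.ker _)
  rwa [show ![⇑a, ⇑b] = EuclideanSpace.equiv (Fin 2) ℝ ∘ ![a, b] by
    ext i : 1; fin_cases i <;> rfl]

namespace Matrix

theorem existsUnique_mulVec_vec3_eq {K : Type*} [Field K] {M : Matrix (Fin 3) (Fin 3) K}
    (hM : IsUnit M.det) (b : Fin 3 → K) :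
    ∃! x : K × K × K, M *ᵥ ![x.1, x.2.1, x.2.2] = b := by
  have hM' : IsUnit M := (isUnit_iff_isUnit_det M).2 hM
  obtain ⟨y, hy⟩ := mulVec_surjective_iff_isUnit.2 hM' b
  refine ⟨(y 0, y 1, y 2), ?_, fun x hx ↦ ?_⟩
  · convert hy
    ext i
    fin_cases i <;> rfl
  · have hxy := mulVec_injective_iff_isUnit.2 hM' (hx.trans hy.symm)
    rw [← hxy]
    rfl

end Matrix

/-- For a nondegenerate triangle with vertices `P₁, P₂, P₃` and
`F_{1i} = ℱ(e_i; P₁, P₂)`, `F_{2i} = ℱ(e_i; P₁, P₃)`, the 3×3 matrix with rows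
`(0,0,1)`, `(F₁₁,F₁₂,1)`, `(F₂₁,F₂₂,1)` is invertible; consequently for each `j ∈ {1,2,3}`
there exist unique reals `m_{j,1}, m_{j,2}, u_j⁰` such that the basis function `u_j` with
values `u_j(P₁) = u_j⁰`, `u_j(P₂) = u_j⁰ + m_{j,1}F₁₁ + m_{j,2}F₁₂`,
`u_j(P₃) = u_j⁰ + m_{j,1}F₂₁ + m_{j,2}F₂₂` satisfies `u_j(P_i) = δ_{ij}` at the vertices. -/
theorem expFit_basis_exists_unique
    (β D : ℝ) (hD : 0 < D) (φ : EuclideanSpace ℝ (Fin 2) → ℝ) (hφ : Continuous φ)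
    (P₁ P₂ P₃ : EuclideanSpace ℝ (Fin 2))
    (hind : LinearIndependent ℝ ![P₂ - P₁, P₃ - P₁])
    (F₁₁ F₁₂ F₂₁ F₂₂ : ℝ)
    (hF₁₁ : F₁₁ = expFitFunctional β D φ (EuclideanSpace.single 0 1) P₁ P₂)
    (hF₁₂ : F₁₂ = expFitFunctional β D φ (EuclideanSpace.single 1 1) P₁ P₂)
    (hF₂₁ : F₂₁ = expFitFunctional β D φ (EuclideanSpace.single 0 1) P₁ P₃)
    (hF₂₂ : F₂₂ = expFitFunctional β D φ (EuclideanSpace.single 1 1) P₁ P₃) :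
    IsUnit (Matrix.det !![(0:ℝ), 0, 1; F₁₁, F₁₂, 1; F₂₁, F₂₂, 1]) ∧
    ∀ j : Fin 3, ∃! mu : ℝ × ℝ × ℝ,
      mu.2.2 = (if j = 0 then (1:ℝ) else 0) ∧
      mu.2.2 + mu.1 * F₁₁ + mu.2.1 * F₁₂ = (if j = 1 then (1:ℝ) else 0) ∧
      mu.2.2 + mu.1 * F₂₁ + mu.2.1 * F₂₂ = (if j = 2 then (1:ℝ) else 0) := by
  obtain ⟨c₁, hc₁, hF₁⟩ :=
    exists_pos_forall_expFitFunctional_eq_mul_inner (β := β) hD hφ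
      (sub_ne_zero.1 (hind.ne_zero 0)).symm
  obtain ⟨c₂, hc₂, hF₂⟩ :=
    exists_pos_forall_expFitFunctional_eq_mul_inner (β := β) hD hφ
      (sub_ne_zero.1 (hind.ne_zero 1)).symm
  have hdet : Matrix.det !![(0:ℝ), 0, 1; F₁₁, F₁₂, 1; F₂₁, F₂₂, 1] =
      c₁ * c₂ * ((P₂ - P₁) 0 * (P₃ - P₁) 1 - (P₂ - P₁) 1 * (P₃ - P₁) 0) := by
    simp only [Matrix.det_fin_three, hF₁₁, hF₁₂, hF₂₁, hF₂₂, hF₁, hF₂,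
      EuclideanSpace.inner_single_left, Real.ringHom_apply, Fin.isValue, Matrix.of_apply,
      Matrix.cons_val', Matrix.cons_val_zero, Matrix.cons_val_one, Matrix.cons_val,
      Matrix.cons_val_fin_one, one_mul, zero_mul, mul_one, sub_self, add_zero, zero_add]
    ring
  have hunit : IsUnit (Matrix.det !![(0:ℝ), 0, 1; F₁₁, F₁₂, 1; F₂₁, F₂₂, 1]) := by
    rw [hdet, isUnit_iff_ne_zero]
    exact mul_ne_zero (by positivity) hind.euclideanSpace_pair_det_ne_zero
  refine ⟨hunit, fun j ↦ (existsUnique_congr fun mu ↦ ?_).1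
    (Matrix.existsUnique_mulVec_vec3_eq hunit (fun i ↦ if j = i then 1 else 0))⟩
  simp [funext_iff, Fin.forall_fin_succ, add_comm, add_left_comm, add_assoc]
end

section
/- Let k ≥ 0 and let v = (v₁, v₂) with v₁, v₂ ∈ P_k be a divergence-free polynomial vector field, i.e. ∂v₁/∂x + ∂v₂/∂y = 0. Then there exists a polynomial ψ ∈ P_{k+1} such that v = curl ψ, i.e. v₁ = −∂ψ/∂y and v₂ = ∂ψ/∂x. In other words, the map curl : P_{k+1} → {v ∈ (P_k)² : div v = 0} is surjective. -/
/-!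
A divergence-free field `(v₁, v₂)` is the same as a closed 1-form `v₂ dx - v₁ dy`, and closed
polynomial forms are exact by explicit integration: with `X^m ↦ X^(m + eᵢ) / (mᵢ + 1)` as
antiderivative in `xᵢ`, take `ψ = ∫ v₂ dx + ∫ w dy`, where `w` is the `x`-free part of `-v₁`.
Integrating raises the total degree by at most one, so `ψ ∈ P_{k+1}`.
-/

open MvPolynomial

namespace MvPolynomial

variable {σ K : Type*}

theorem totalDegree_map_le_of_monomial {R S τ : Type*} [CommSemiring R] [CommSemiring S]
    (L : MvPolynomial σ R →+ MvPolynomial τ S) (d : ℕ)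
    (hL : ∀ m c, (L (monomial m c)).totalDegree ≤ (m.sum fun _ e => e) + d)
    (p : MvPolynomial σ R) : (L p).totalDegree ≤ p.totalDegree + d := by
  conv_lhs => rw [p.as_sum, map_sum]
  refine (totalDegree_finsetSum _ _).trans (Finset.sup_le fun m hm => ?_)
  exact (hL _ _).trans (Nat.add_le_add_right (le_totalDegree hm) d)

variable [Field K]

/-- The antiderivative in the variable `i` with zero constant of integration:
`X^m ↦ X^(m + eᵢ) / (mᵢ + 1)`. -/
noncomputable def integral (i : σ) : MvPolynomial σ K →ₗ[K] MvPolynomial σ K :=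
  Finsupp.lsum K (fun m => ((m i + 1 : K))⁻¹ • monomial (m + Finsupp.single i 1)) ∘ₗ
    (AddMonoidAlgebra.coeffLinearEquiv K).toLinearMap

theorem integral_monomial (i : σ) (m : σ →₀ ℕ) (c : K) :
    integral i (monomial m c) = monomial (m + Finsupp.single i 1) (((m i : K) + 1)⁻¹ * c) := by
  rw [← single_eq_monomial, integral]
  simp [smul_monomial]

theorem pderiv_integral_of_ne {i j : σ} (h : i ≠ j) (p : MvPolynomial σ K) :
    pderiv i (integral j p) = integral j (pderiv i p) := by
  classical
  induction p using MvPolynomial.induction_on' with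
  | monomial m c =>
    rw [integral_monomial, pderiv_monomial, pderiv_monomial, integral_monomial]
    have hmi : (m + Finsupp.single j 1 : σ →₀ ℕ) i = m i := by simp [h.symm]
    have hmj : (m - Finsupp.single i 1 : σ →₀ ℕ) j = m j := by simp [h]
    have hshift : m + Finsupp.single j 1 - Finsupp.single i 1
        = m - Finsupp.single i 1 + Finsupp.single j 1 := by
      ext a
      rcases eq_or_ne a i with rfl | hai
      · simp [h]
      · simp [Finsupp.single_apply, hai.symm]
    rw [hmi, hmj, hshift]
    ring_nf
  | add p q hp hq => simp only [map_add, hp, hq]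

theorem totalDegree_integral_le (i : σ) (p : MvPolynomial σ K) :
    (integral i p).totalDegree ≤ p.totalDegree + 1 := by
  classical
  refine totalDegree_map_le_of_monomial (integral i).toAddMonoidHom 1 (fun m c => ?_) p
  simp only [LinearMap.toAddMonoidHom_coe, integral_monomial]
  refine (totalDegree_monomial_le _ _).trans_eq ?_
  rw [Finsupp.sum_add_index (by simp) (by simp), Finsupp.sum_single_index rfl]
  rfl

variable [CharZero K]

theorem pderiv_integral_self (i : σ) (p : MvPolynomial σ K) :
    pderiv i (integral i p) = p := by
  induction p using MvPolynomial.induction_on' with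
  | monomial m c =>
    rw [integral_monomial, pderiv_monomial, add_tsub_cancel_right]
    simp only [Finsupp.add_apply, Finsupp.single_eq_same, Nat.cast_add, Nat.cast_one]
    congr 1
    field_simp
  | add p q hp hq => rw [map_add, map_add, hp, hq]

theorem integral_pderiv_monomial (i : σ) (m : σ →₀ ℕ) (c : K) :
    integral i (pderiv i (monomial m c)) = if m i = 0 then 0 else monomial m c := by
  classical
  rw [pderiv_monomial, integral_monomial]
  split_ifs with hm
  · simp [hm]
  have hpos : 1 ≤ m i := Nat.one_le_iff_ne_zero.mpr hm
  rw [tsub_add_cancel_of_le (Finsupp.single_le_iff.mpr hpos), Finsupp.tsub_apply,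
    Finsupp.single_eq_same, Nat.cast_sub hpos, Nat.cast_one, sub_add_cancel]
  have hne : (m i : K) ≠ 0 := Nat.cast_ne_zero.mpr hm
  congr 1
  field_simp

theorem totalDegree_integral_pderiv_le (i : σ) (p : MvPolynomial σ K) :
    (integral i (pderiv i p)).totalDegree ≤ p.totalDegree := by
  refine totalDegree_map_le_of_monomial
    ((integral i).toAddMonoidHom.comp (pderiv i).toAddMonoidHom) 0 (fun m c => ?_) p
  change (integral i (pderiv i (monomial m c))).totalDegree ≤ _
  rw [integral_pderiv_monomial]
  split_ifs
  · simp
  · exact totalDegree_monomial_le _ _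

theorem exists_pderiv_eq_of_pderiv_eq {i j : σ} (hij : i ≠ j) {k : ℕ}
    {p q : MvPolynomial σ K} (hp : p.totalDegree ≤ k) (hq : q.totalDegree ≤ k)
    (hclosed : pderiv j p = pderiv i q) :
    ∃ ψ : MvPolynomial σ K, ψ.totalDegree ≤ k + 1 ∧ pderiv i ψ = p ∧ pderiv j ψ = q := by
  -- `w` collects the monomials of `q` free of `Xᵢ`, which `∫ p dXᵢ` cannot produce.
  set w := q - integral i (pderiv i q) with hw
  have hw_pderiv : pderiv i w = 0 := by rw [map_sub, pderiv_integral_self, sub_self]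
  have hw_deg : w.totalDegree ≤ k := by
    rw [hw, sub_eq_add_neg]
    refine (totalDegree_add _ _).trans (max_le hq ?_)
    rw [totalDegree_neg]
    exact (totalDegree_integral_pderiv_le i q).trans hq
  refine ⟨integral i p + integral j w, ?_, ?_, ?_⟩
  · refine (totalDegree_add _ _).trans (max_le ?_ ?_)
    · exact (totalDegree_integral_le i p).trans (Nat.add_le_add_right hp 1)
    · exact (totalDegree_integral_le j w).trans (Nat.add_le_add_right hw_deg 1)
  · rw [map_add, pderiv_integral_self, pderiv_integral_of_ne hij, hw_pderiv, map_zero, add_zero]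
  · rw [map_add, pderiv_integral_self, pderiv_integral_of_ne hij.symm, hclosed, hw,
      add_sub_cancel]

end MvPolynomial

/-- Every divergence-free polynomial vector field `v = (v₁, v₂)` of total degree at most `k`
is the curl of a scalar polynomial `ψ` of total degree at most `k+1`, i.e.
`v₁ = −∂ψ/∂y` and `v₂ = ∂ψ/∂x`: the map `curl : P_{k+1} → {v ∈ (P_k)² : div v = 0}`
is surjective. -/
theorem curl_surjective_onto_divFree (k : ℕ) (v₁ v₂ : MvPolynomial (Fin 2) ℝ)
    (h₁ : v₁.totalDegree ≤ k) (h₂ : v₂.totalDegree ≤ k)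
    (hdiv : pderiv 0 v₁ + pderiv 1 v₂ = 0) :
    ∃ ψ : MvPolynomial (Fin 2) ℝ, ψ.totalDegree ≤ k + 1 ∧
      v₁ = -(pderiv 1 ψ) ∧ v₂ = pderiv 0 ψ := by
  have hclosed : pderiv 1 v₂ = pderiv 0 (-v₁) := by
    rw [map_neg]
    exact eq_neg_of_add_eq_zero_right hdiv
  obtain ⟨ψ, hdeg, hψ₀, hψ₁⟩ := exists_pderiv_eq_of_pderiv_eq (i := 0) (j := 1) (by decide)
    h₂ (by rwa [totalDegree_neg]) hclosed
  exact ⟨ψ, hdeg, by rw [hψ₁, neg_neg], hψ₀.symm⟩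
end

section
/- Let k ≥ 0. For every polynomial r ∈ P_k there exists an element v of the Raviart–Thomas space RT_k, i.e. v = p + q·(x,y) with p ∈ (P_k)² and q a homogeneous polynomial of degree k, such that div v = r. In other words, the divergence maps RT_k onto P_k. -/
open MvPolynomial

lemma deg_eq (u : Fin 2 →₀ ℕ) : (u.sum fun _ e => e) = u 0 + u 1 := by
  rw [Finsupp.sum_fintype _ _ (fun _ => rfl), Fin.sum_univ_two]

lemma mono_case (k : ℕ) (u : Fin 2 →₀ ℕ) (c : ℝ) (hu : u 0 + u 1 ≤ k) :
    ∃ p₁ p₂ q : MvPolynomial (Fin 2) ℝ,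
      p₁.totalDegree ≤ k ∧ p₂.totalDegree ≤ k ∧ q.IsHomogeneous k ∧
      pderiv 0 (p₁ + X 0 * q) + pderiv 1 (p₂ + X 1 * q) = monomial u c := by
  rcases eq_or_lt_of_le hu with heq | hlt
  · -- top degree: use q
    refine ⟨0, 0, monomial u (c / (k + 2)), by simp, by simp, isHomogeneous_monomial _ ?_, ?_⟩
    · show (u.sum fun _ e => e) = k
      rw [deg_eq]; exact heq
    · have h0 : X (0 : Fin 2) * monomial u (c / (k + 2)) =
          monomial (Finsupp.single 0 1 + u) (c / (k + 2)) := by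
        rw [X, monomial_mul, one_mul]
      have h1 : X (1 : Fin 2) * monomial u (c / (k + 2)) =
          monomial (Finsupp.single 1 1 + u) (c / (k + 2)) := by
        rw [X, monomial_mul, one_mul]
      rw [zero_add, zero_add, h0, h1, pderiv_monomial, pderiv_monomial,
        add_tsub_cancel_left, add_tsub_cancel_left, ← map_add]
      congr 1
      have h2 : ((Finsupp.single (0:Fin 2) 1 + u : Fin 2 →₀ ℕ) 0 : ℝ) = u 0 + 1 := by
        simp [add_comm]
      have h3 : ((Finsupp.single (1:Fin 2) 1 + u : Fin 2 →₀ ℕ) 1 : ℝ) = u 1 + 1 := by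
        simp [add_comm]
      rw [h2, h3, ← mul_add]
      have h4 : ((u 0 : ℝ) + 1 + ((u 1 : ℝ) + 1)) = (k : ℝ) + 2 := by
        rw [← heq]; push_cast; ring
      rw [h4, div_mul_cancel₀]
      positivity
  · -- lower degree: integrate in x
    refine ⟨monomial (u + Finsupp.single 0 1) (c / ((u 0 : ℝ) + 1)), 0, 0, ?_, by simp,
      isHomogeneous_zero _ _ _, ?_⟩
    · refine le_trans (totalDegree_monomial_le _ _) ?_
      show ((u + Finsupp.single 0 1).sum fun _ e => e) ≤ k
      rw [deg_eq]
      simp only [Finsupp.coe_add, Pi.add_apply, Finsupp.single_apply]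
      simp
      omega
    · rw [mul_zero, mul_zero, add_zero, add_zero, pderiv_monomial,
        add_tsub_cancel_right]
      have : (pderiv (1 : Fin 2)) (0 : MvPolynomial (Fin 2) ℝ) = 0 := by simp
      rw [this, add_zero]
      congr 1
      have h2 : ((u + Finsupp.single 0 1 : Fin 2 →₀ ℕ) 0 : ℝ) = u 0 + 1 := by simp
      rw [h2, div_mul_cancel₀]
      positivity

set_option maxHeartbeats 1000000 in
/-- The divergence maps the Raviart–Thomas space `RT_k` onto `P_k`: for every polynomial
`r` of total degree at most `k` there are `p₁, p₂ ∈ P_k` and a homogeneous polynomial `q`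
of degree `k` such that `div (p₁ + x q, p₂ + y q) = r`. -/
theorem div_RT_surjective (k : ℕ) (r : MvPolynomial (Fin 2) ℝ) (hr : r.totalDegree ≤ k) :
    ∃ p₁ p₂ q : MvPolynomial (Fin 2) ℝ,
      p₁.totalDegree ≤ k ∧ p₂.totalDegree ≤ k ∧ q.IsHomogeneous k ∧
      pderiv 0 (p₁ + X 0 * q) + pderiv 1 (p₂ + X 1 * q) = r := by
  set P : MvPolynomial (Fin 2) ℝ → Prop := fun s => ∃ p₁ p₂ q : MvPolynomial (Fin 2) ℝ,
      p₁.totalDegree ≤ k ∧ p₂.totalDegree ≤ k ∧ q.IsHomogeneous k ∧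
      pderiv 0 (p₁ + X 0 * q) + pderiv 1 (p₂ + X 1 * q) = s with hP
  show P r
  have hzero : P 0 := ⟨0, 0, 0, by simp, by simp, isHomogeneous_zero _ _ _, by simp⟩
  have hadd : ∀ a b, P a → P b → P (a + b) := by
    rintro a b ⟨p₁, p₂, q, h1, h2, h3, h4⟩ ⟨p₁', p₂', q', h1', h2', h3', h4'⟩
    refine ⟨p₁ + p₁', p₂ + p₂', q + q',
      le_trans (totalDegree_add _ _) (max_le h1 h1'),
      le_trans (totalDegree_add _ _) (max_le h2 h2'), h3.add h3', ?_⟩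
    rw [← h4, ← h4']
    rw [show p₁ + p₁' + X 0 * (q + q') = (p₁ + X 0 * q) + (p₁' + X 0 * q') by ring,
      show p₂ + p₂' + X 1 * (q + q') = (p₂ + X 1 * q) + (p₂' + X 1 * q') by ring,
      map_add, map_add]
    simp only [map_add]
    abel
  rw [r.as_sum]
  refine Finset.sum_induction _ P hadd hzero ?_
  intro v hv
  exact mono_case k v _ (by rw [← deg_eq]; exact le_trans (le_totalDegree hv) hr)
end

section
/- Let β ≠ 0, D ≠ 0, a ≠ 0, b ≠ 0, c ∈ ℝ, and let φ(x, y) = a x + b y + c be a linear potential. Then for all m₁, m₂, u₀ ∈ ℝ and all (x, y) ∈ ℝ², the value along Path 2 (the two-section path (0,0) → (0,y) → (x,y)) satisfies u₀ + (e^{−βφ(x,y)}/D)·(m₁ ∫₀^y e^{βφ(0,s)} ds + m₂ ∫₀^x e^{βφ(t,y)} dt) = u₀ + m₂/(βaD) + e^{−βax}·(m₁/(βbD) − m₂/(βaD)) − (m₁/(βbD))·e^{−β(ax+by)}. -/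
open MeasureTheory intervalIntegral Real

lemma my_integral_exp_mul (c : ℝ) (hc : c ≠ 0) (a b : ℝ) :
    (∫ x in a..b, Real.exp (c * x)) = (Real.exp (c * b) - Real.exp (c * a)) / c := by
  have D : ∀ x : ℝ, HasDerivAt (fun y : ℝ => Real.exp (c * y) / c) (Real.exp (c * x)) x := by
    intro x
    rw [← mul_div_cancel_right₀ (Real.exp (c * x)) hc]
    simpa using ((Real.hasDerivAt_exp (c*x)).comp x ((hasDerivAt_id x).const_mul c)).div_const c
  rw [intervalIntegral.integral_eq_sub_of_hasDerivAt (fun x _ => D x)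
    ((Real.continuous_exp.comp (continuous_const.mul continuous_id)).intervalIntegrable a b)]
  ring

/-- Closed-form evaluation of the exponentially fitted basis function along Path 2,
the two-section path `(0,0) → (0,y) → (x,y)`, for the linear potential
`φ(x,y) = ax + by + c`. -/
theorem expFit_path2_closed_form (β D a b c : ℝ) (hβ : β ≠ 0) (hD : D ≠ 0)
    (ha : a ≠ 0) (hb : b ≠ 0) (m₁ m₂ u₀ x y : ℝ) :
    u₀ + Real.exp (-(β * (a * x + b * y + c))) / D *
        (m₁ * (∫ s in (0:ℝ)..y, Real.exp (β * (b * s + c))) +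
         m₂ * (∫ t in (0:ℝ)..x, Real.exp (β * (a * t + b * y + c)))) =
      u₀ + m₂ / (β * a * D) +
        Real.exp (-(β * a * x)) * (m₁ / (β * b * D) - m₂ / (β * a * D)) -
        m₁ / (β * b * D) * Real.exp (-(β * (a * x + b * y))) := by
  have h1 : (∫ s in (0:ℝ)..y, Real.exp (β * (b * s + c)))
      = Real.exp (β * c) * ((Real.exp (β * b * y) - 1) / (β * b)) := by
    have : ∀ s : ℝ, Real.exp (β * (b * s + c)) = Real.exp (β * c) * Real.exp ((β*b) * s) := by
      intro s; rw [← Real.exp_add]; ring_nf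
    simp only [this]
    rw [intervalIntegral.integral_const_mul, my_integral_exp_mul (β*b) (mul_ne_zero hβ hb)]
    simp
  have h2 : (∫ t in (0:ℝ)..x, Real.exp (β * (a * t + b * y + c)))
      = Real.exp (β * (b*y+c)) * ((Real.exp (β * a * x) - 1) / (β * a)) := by
    have : ∀ t : ℝ, Real.exp (β * (a * t + b * y + c))
        = Real.exp (β * (b*y+c)) * Real.exp ((β*a) * t) := by
      intro t; rw [← Real.exp_add]; ring_nf
    simp only [this]
    rw [intervalIntegral.integral_const_mul, my_integral_exp_mul (β*a) (mul_ne_zero hβ ha)]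
    simp
  rw [h1, h2,
    show -(β*(a*x+b*y+c)) = -(β*a*x) + (-(β*b*y) + -(β*c)) by ring,
    show β*(b*y+c) = β*b*y + β*c by ring,
    show -(β*(a*x+b*y)) = -(β*a*x) + -(β*b*y) by ring]
  simp only [Real.exp_add, Real.exp_neg]
  have h3 := Real.exp_ne_zero (β*a*x)
  have h4 := Real.exp_ne_zero (β*b*y)
  have h5 := Real.exp_ne_zero (β*c)
  field_simp
  ring
end
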